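/- Let n ≥ 2 and let L be an n×n real matrix that is essentially nonnegative (all off-diagonal entries nonnegative), irreducible, and has all column sums equal to zero. Let β_i > 0 and γ_i > 0 for i = 1,…,n, set F = diag(β_1,…,β_n), D = diag(γ_1,…,γ_n), V(d) = D − d·L, and R0(d) = ρ(F·V(d)⁻¹). Let C_{ii} denote the diagonal cofactors of L. Then lim_{d→∞} R0(d) = (Σ_{i=1}^n β_i·C_{ii}) / (Σ_{i=1}^n γ_i·C_{ii}). -/

import Mathlib

/-!
Write `V(d) = d • (d⁻¹ • D - L)`. The rows of `d⁻¹ • D - L` sum to `d⁻¹ • γ`, so its determinant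
is `d⁻¹` times the determinant of the same matrix with row `0` replaced by `γ`; hence
`V(d)⁻¹ → adj L / c` with `c = ∑ j, γ j * (adj L) j 0`. For an irreducible essentially
nonnegative `L` with zero column sums, the left kernel is spanned by `1` and every nonzero kernel
vector has entries of one strict sign, so `adj L` has constant rows `w i = C_ii`, all of one sign.
The limit `F · adj L / c` is thus a rank-one matrix with positive constant rows `β i * w i / c`;
its spectral radius `∑ i, β i * w i / c` is also its largest absolute column sum. The column-sum
bound on eigenvalues, together with the continuity of the roots of the characteristic
polynomial, makes the spectral radius continuous at such a matrix.
-/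

open Matrix Filter Set Topology

/-- A square matrix is irreducible if it is not permutation-similar to a nontrivial block
upper triangular matrix; equivalently, for every nonempty proper subset `S` of indices there
are `i ∈ S` and `j ∉ S` with `A i j ≠ 0`. -/
def IsIrreducibleMatrix {n : ℕ} (A : Matrix (Fin n) (Fin n) ℝ) : Prop :=
  ∀ S : Set (Fin n), S.Nonempty → S ≠ Set.univ → ∃ i ∈ S, ∃ j ∈ Sᶜ, A i j ≠ 0

/-- The spectral bound of a real square matrix: the maximum of the real parts of its
(complex) eigenvalues, i.e. of the roots of its characteristic polynomial over `ℂ`. -/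
noncomputable def spectralBound {n : ℕ} (A : Matrix (Fin n) (Fin n) ℝ) : ℝ :=
  sSup {x : ℝ | ∃ μ : ℂ, ((A.map Complex.ofReal).charpoly).IsRoot μ ∧ μ.re = x}

/-- The spectral radius of a real square matrix: the maximum modulus of its (complex)
eigenvalues, i.e. of the roots of its characteristic polynomial over `ℂ`. -/
noncomputable def specRad {n : ℕ} (A : Matrix (Fin n) (Fin n) ℝ) : ℝ :=
  sSup {x : ℝ | ∃ μ : ℂ, ((A.map Complex.ofReal).charpoly).IsRoot μ ∧ ‖μ‖ = x}

/-- The `(i,j)` cofactor of a square matrix: `(-1)^(i+j)` times the determinant of the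
matrix obtained by deleting row `i` and column `j`. -/
noncomputable def cofactor {n : ℕ} (A : Matrix (Fin (n+1)) (Fin (n+1)) ℝ) (i j : Fin (n+1)) : ℝ :=
  (-1 : ℝ) ^ ((i : ℕ) + (j : ℕ)) * (A.submatrix i.succAbove j.succAbove).det

open Polynomial

section
attribute [local instance] Matrix.linftyOpNormedRing Matrix.linftyOpNormedAlgebra

lemma norm_le_of_isRoot_charpoly {m : Type*} [Fintype m] [DecidableEq m] {A : Matrix m m ℂ}
    {b : ℝ} (hb : ∀ j, ∑ i, ‖A i j‖ ≤ b) {μ : ℂ} (hμ : A.charpoly.IsRoot μ) : ‖μ‖ ≤ b := by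
  have : Nonempty m := by
    by_contra h
    rw [not_nonempty_iff] at h
    simp [Matrix.charpoly] at hμ
  obtain ⟨j, -, hj⟩ := Finset.exists_mem_eq_sup Finset.univ Finset.univ_nonempty
    fun j => ∑ i, ‖Aᵀ j i‖₊
  calc ‖μ‖ ≤ ‖Aᵀ‖ := spectrum.norm_le_norm_of_mem <|
        mem_spectrum_iff_isRoot_charpoly.2 (by rwa [charpoly_transpose])
    _ = ∑ i, ‖A i j‖ := by rw [linfty_opNorm_def, hj]; simp
    _ ≤ b := hb j
end

lemma Polynomial.Monic.exists_isRoot_norm_sub_lt {p : ℂ[X]} (hp : p.Monic) (z : ℂ) {ε : ℝ}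
    (hε : 0 ≤ ε) (h : ‖p.eval z‖ < ε ^ p.natDegree) : ∃ μ, p.IsRoot μ ∧ ‖z - μ‖ < ε := by
  by_contra! hfar
  lift ε to NNReal using hε
  have hsplit : p.Splits := IsAlgClosed.splits p
  have heval : p.eval z = (p.roots.map (z - ·)).prod := by
    conv_lhs => rw [hsplit.eq_prod_roots_of_monic hp]
    simp [eval_multiset_prod, Multiset.map_map]
  have hnorm : ‖p.eval z‖₊ = (p.roots.map fun μ => ‖z - μ‖₊).prod := by
    rw [heval]
    exact (map_multiset_prod (nnnormHom (α := ℂ)) _).trans (by rw [Multiset.map_map]; rfl)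
  have : ε ^ p.natDegree ≤ ‖p.eval z‖₊ := by
    rw [hnorm, ← splits_iff_card_roots.1 hsplit, ← Multiset.card_map (fun μ => ‖z - μ‖₊)]
    refine Multiset.pow_card_le_prod fun x hx => ?_
    obtain ⟨μ, hμ, rfl⟩ := Multiset.mem_map.1 hx
    exact_mod_cast hfar μ (isRoot_of_mem_roots hμ)
  exact h.not_ge (by exact_mod_cast this)

lemma specRad_le {n : ℕ} {A : Matrix (Fin n) (Fin n) ℝ} {b : ℝ} (hb₀ : 0 ≤ b)
    (hb : ∀ j, ∑ i, |A i j| ≤ b) : specRad A ≤ b := by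
  refine Real.sSup_le ?_ hb₀
  rintro _ ⟨μ, hμ, rfl⟩
  exact norm_le_of_isRoot_charpoly (fun j => by simpa using hb j) hμ

lemma norm_le_specRad {n : ℕ} {A : Matrix (Fin n) (Fin n) ℝ} {μ : ℂ}
    (hμ : (A.map Complex.ofReal).charpoly.IsRoot μ) : ‖μ‖ ≤ specRad A :=
  le_csSup ((finite_setOfPred_isRoot (charpoly_monic _).ne_zero).image _).bddAbove ⟨μ, hμ, rfl⟩

lemma continuous_eval_charpoly_map_ofReal {m : Type*} [Fintype m] [DecidableEq m] (μ : ℂ) :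
    Continuous fun M : Matrix m m ℝ => (M.map Complex.ofReal).charpoly.eval μ := by
  simp only [eval_charpoly]
  exact (continuous_const.sub (continuous_id.matrix_map Complex.continuous_ofReal)).matrix_det

lemma tendsto_specRad {n : ℕ} {ι : Type*} {l : Filter ι} {A : ι → Matrix (Fin n) (Fin n) ℝ}
    {A₀ : Matrix (Fin n) (Fin n) ℝ} (hA : Tendsto A l (𝓝 A₀)) {μ : ℂ}
    (hμ : (A₀.map Complex.ofReal).charpoly.IsRoot μ) (hcol : ∀ j, ∑ i, |A₀ i j| ≤ ‖μ‖) :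
    Tendsto (fun x => specRad (A x)) l (𝓝 ‖μ‖) := by
  rw [Metric.tendsto_nhds]
  intro ε hε
  have hcolsum : ∀ᶠ x in l, ∀ j, ∑ i, |A x i j| < ‖μ‖ + ε / 2 := by
    refine eventually_all.2 fun j => ?_
    have hcont : Continuous fun M : Matrix (Fin n) (Fin n) ℝ => ∑ i, |M i j| := by fun_prop
    exact ((hcont.tendsto A₀).comp hA).eventually_lt_const (by linarith [hcol j])
  have heval : ∀ᶠ x in l, ‖((A x).map Complex.ofReal).charpoly.eval μ‖ < ε ^ n := by
    have := ((continuous_eval_charpoly_map_ofReal (m := Fin n) μ).norm.tendsto A₀).comp hA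
    rw [Function.comp_def, hμ.eq_zero, norm_zero] at this
    exact this.eventually_lt_const (pow_pos hε n)
  filter_upwards [hcolsum, heval] with x hxcol hxeval
  obtain ⟨ν, hν, hμν⟩ := (charpoly_monic ((A x).map Complex.ofReal)).exists_isRoot_norm_sub_lt
    μ hε.le (by rwa [charpoly_natDegree_eq_dim, Fintype.card_fin])
  have hlower : ‖μ‖ - ε < specRad (A x) := by
    linarith [norm_sub_norm_le μ ν, norm_le_specRad hν]
  have hupper : specRad (A x) ≤ ‖μ‖ + ε / 2 :=
    specRad_le (by positivity) fun j => (hxcol j).le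
  rw [Real.dist_eq, abs_lt]
  constructor <;> linarith

lemma isRoot_charpoly_sum_of_apply_eq {m : Type*} [Fintype m] [DecidableEq m]
    {A : Matrix m m ℝ} {p : m → ℝ} (hA : ∀ i j, A i j = p i) (hp : p ≠ 0) :
    (A.map Complex.ofReal).charpoly.IsRoot (∑ i, p i : ℝ) := by
  change (A.map Complex.ofRealHom).charpoly.IsRoot (Complex.ofRealHom _)
  rw [charpoly_map]
  refine IsRoot.map ?_
  rw [IsRoot, eval_charpoly, ← exists_mulVec_eq_zero_iff]
  have hAp : A *ᵥ p = (∑ i, p i) • p := by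
    ext i
    simp [mulVec, dotProduct, hA, ← Finset.mul_sum, mul_comm]
  refine ⟨p, hp, ?_⟩
  rw [sub_mulVec, hAp, scalar_apply, ← smul_one_eq_diagonal, smul_mulVec, one_mulVec, sub_self]

lemma tendsto_specRad_of_apply_eq {n : ℕ} {ι : Type*} {l : Filter ι}
    {A : ι → Matrix (Fin n) (Fin n) ℝ} {A₀ : Matrix (Fin n) (Fin n) ℝ} (hA : Tendsto A l (𝓝 A₀))
    {p : Fin n → ℝ} (hA₀ : ∀ i j, A₀ i j = p i) (hp₀ : ∀ i, 0 ≤ p i) (hp : p ≠ 0) :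
    Tendsto (fun x => specRad (A x)) l (𝓝 (∑ i, p i)) := by
  have hsum : ‖((∑ i, p i : ℝ) : ℂ)‖ = ∑ i, p i := by
    rw [Complex.norm_real, Real.norm_of_nonneg (Finset.sum_nonneg fun i _ => hp₀ i)]
  rw [← hsum]
  refine tendsto_specRad hA (isRoot_charpoly_sum_of_apply_eq hA₀ hp) fun j => ?_
  simp_rw [hsum, hA₀, abs_of_nonneg (hp₀ _), le_refl]

section ZeroColumnSums

variable {ι : Type*} [Fintype ι] {L : Matrix ι ι ℝ}

lemma sum_mulVec_eq_zero (hcol : ∀ j, ∑ i, L i j = 0) (x : ι → ℝ) : ∑ i, (L *ᵥ x) i = 0 := by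
  simp only [mulVec, dotProduct]
  rw [Finset.sum_comm]
  exact Finset.sum_eq_zero fun j _ => by rw [← Finset.sum_mul, hcol j, zero_mul]

lemma det_eq_zero_of_sum_col_eq_zero [DecidableEq ι] [Nonempty ι] (hcol : ∀ j, ∑ i, L i j = 0) :
    L.det = 0 := by
  rw [← exists_vecMul_eq_zero_iff]
  exact ⟨1, one_ne_zero, funext fun j => by simp [vecMul, dotProduct, hcol j]⟩

lemma mulVec_abs_eq_zero (hess : ∀ i j, i ≠ j → 0 ≤ L i j) (hcol : ∀ j, ∑ i, L i j = 0)
    {p : ι → ℝ} (hp : L *ᵥ p = 0) : L *ᵥ |p| = 0 := by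
  -- once the sign of `p i` is fixed, passing to `|p|` can only increase row `i`
  have key : ∀ q : ι → ℝ, L *ᵥ q = 0 → ∀ i, 0 ≤ q i → 0 ≤ (L *ᵥ |q|) i := by
    intro q hq i hqi
    calc (0 : ℝ) = (L *ᵥ q) i := by rw [hq, Pi.zero_apply]
      _ ≤ (L *ᵥ |q|) i := Finset.sum_le_sum fun j _ => ?_
    rcases eq_or_ne i j with rfl | hij
    · rw [Pi.abs_apply, abs_of_nonneg hqi]
    · exact mul_le_mul_of_nonneg_left (le_abs_self _) (hess i j hij)
  have hnonneg : ∀ i, 0 ≤ (L *ᵥ |p|) i := fun i => by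
    rcases le_total 0 (p i) with h | h
    · exact key p hp i h
    · simpa using key (-p) (by rw [mulVec_neg, hp, neg_zero]) i (by simpa using h)
  ext i
  exact (Finset.sum_eq_zero_iff_of_nonneg fun i _ => hnonneg i).1
    (sum_mulVec_eq_zero hcol |p|) i (Finset.mem_univ i)

end ZeroColumnSums

section Irreducible

variable {n : ℕ} {L : Matrix (Fin n) (Fin n) ℝ}

lemma pos_of_mulVec_eq_zero (hess : ∀ i j, i ≠ j → 0 ≤ L i j) (hirr : IsIrreducibleMatrix L)
    {p : Fin n → ℝ} (hp : L *ᵥ p = 0) (hp₀ : ∀ i, 0 ≤ p i) (hp_ne : p ≠ 0) (i : Fin n) :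
    0 < p i := by
  by_contra! hpi
  set S : Set (Fin n) := {i | p i = 0}
  have hS_univ : S ≠ univ := fun h => hp_ne (funext fun i => (h ▸ mem_univ i : i ∈ S))
  obtain ⟨a, ha, b, hb, hab⟩ := hirr S ⟨i, le_antisymm hpi (hp₀ i)⟩ hS_univ
  have hpb : 0 < p b := (hp₀ b).lt_of_ne' hb
  -- row `a` of `L *ᵥ p = 0` is a sum of nonnegative terms, one of which is `L a b * p b`
  have hterms : ∀ j ∈ Finset.univ, 0 ≤ L a j * p j := fun j _ => by
    rcases eq_or_ne a j with rfl | haj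
    · rw [show p a = 0 from ha, mul_zero]
    · exact mul_nonneg (hess a j haj) (hp₀ j)
  have := (Finset.sum_eq_zero_iff_of_nonneg hterms).1 (congrFun hp a) b (Finset.mem_univ b)
  exact hab ((mul_eq_zero.1 this).resolve_right hpb.ne')

lemma pos_or_neg_of_mulVec_eq_zero (hess : ∀ i j, i ≠ j → 0 ≤ L i j)
    (hirr : IsIrreducibleMatrix L) (hcol : ∀ j, ∑ i, L i j = 0) {p : Fin n → ℝ}
    (hp : L *ᵥ p = 0) (hp_ne : p ≠ 0) : (∀ i, 0 < p i) ∨ (∀ i, p i < 0) := by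
  have habs : L *ᵥ |p| = 0 := mulVec_abs_eq_zero hess hcol hp
  by_cases h : |p| - p = 0
  · refine Or.inl fun i => ?_
    rw [← sub_eq_zero.1 h]
    exact pos_of_mulVec_eq_zero hess hirr habs (fun i => abs_nonneg (p i))
      (fun h0 => hp_ne (funext fun i => abs_eq_zero.1 (congrFun h0 i))) i
  · refine Or.inr fun i => ?_
    have := pos_of_mulVec_eq_zero (p := |p| - p) hess hirr
      (by rw [mulVec_sub, habs, hp, sub_zero]) (fun i => sub_nonneg.2 (le_abs_self (p i))) h i
    rw [Pi.sub_apply, sub_pos] at this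
    exact lt_of_not_ge fun h0 => this.ne' (abs_of_nonneg h0)

lemma eq_of_vecMul_eq_zero (hess : ∀ i j, i ≠ j → 0 ≤ L i j) (hirr : IsIrreducibleMatrix L)
    (hcol : ∀ j, ∑ i, L i j = 0) {x : Fin n → ℝ} (hx : x ᵥ* L = 0) (i j : Fin n) :
    x i = x j := by
  suffices hmax : ∀ i₀, (∀ k, x k ≤ x i₀) → ∀ k, x k = x i₀ by
    obtain ⟨i₀, -, hi₀⟩ := Finset.exists_max_image Finset.univ x ⟨i, Finset.mem_univ i⟩
    have := hmax i₀ fun k => hi₀ k (Finset.mem_univ k)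
    rw [this i, this j]
  intro i₀ hi₀
  by_contra! hne
  set S : Set (Fin n) := {k | x k = x i₀}
  have hSc : Sᶜ.Nonempty := hne
  obtain ⟨a, ha, b, hb, hab⟩ := hirr Sᶜ hSc fun h => (h ▸ mem_univ i₀ : i₀ ∈ Sᶜ) rfl
  have hxb : x b = x i₀ := by rwa [compl_compl] at hb
  have hxa : x a < x b := hxb ▸ (hi₀ a).lt_of_ne ha
  -- column `b`, shifted by `x b` times the zero column sum, is a sum of nonpositive terms
  have hsum : ∑ k, (x k - x b) * L k b = 0 := by
    simp only [sub_mul, Finset.sum_sub_distrib, ← Finset.mul_sum, hcol b, mul_zero, sub_zero]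
    exact congrFun hx b
  have hterms : ∀ k ∈ Finset.univ, (x k - x b) * L k b ≤ 0 := fun k _ => by
    rcases eq_or_ne k b with rfl | hkb
    · simp
    · exact mul_nonpos_of_nonpos_of_nonneg (by linarith [hi₀ k]) (hess k b hkb)
  have := (Finset.sum_eq_zero_iff_of_nonpos hterms).1 hsum a (Finset.mem_univ a)
  exact hab ((mul_eq_zero.1 this).resolve_left (sub_ne_zero.2 hxa.ne))

end Irreducible

section Adjugate

variable {n : ℕ} {L : Matrix (Fin (n + 1)) (Fin (n + 1)) ℝ}

lemma adjugate_apply_eq_apply_zero (hess : ∀ i j, i ≠ j → 0 ≤ L i j)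
    (hirr : IsIrreducibleMatrix L) (hcol : ∀ j, ∑ i, L i j = 0) (i j : Fin (n + 1)) :
    adjugate L i j = adjugate L i 0 := by
  refine eq_of_vecMul_eq_zero hess hirr hcol (x := adjugate L i) ?_ j 0
  rw [← mul_apply_eq_vecMul, adjugate_mul, det_eq_zero_of_sum_col_eq_zero hcol, zero_smul]
  rfl

lemma mulVec_adjugate_col_eq_zero (hcol : ∀ j, ∑ i, L i j = 0) (j : Fin (n + 1)) :
    L *ᵥ (fun i => adjugate L i j) = 0 := by
  ext i
  change (L * adjugate L) i j = 0
  rw [mul_adjugate, det_eq_zero_of_sum_col_eq_zero hcol, zero_smul, Matrix.zero_apply]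

lemma adjugate_zero_zero_ne_zero (hess : ∀ i j, i ≠ j → 0 ≤ L i j)
    (hirr : IsIrreducibleMatrix L) (hcol : ∀ j, ∑ i, L i j = 0) : adjugate L 0 0 ≠ 0 := by
  rw [adjugate_fin_succ_eq_det_submatrix]
  simp only [Fin.val_zero, add_zero, pow_zero, one_mul, Fin.succAbove_zero]
  intro hdet
  obtain ⟨y, hy_ne, hy⟩ := exists_mulVec_eq_zero_iff.2 hdet
  -- extending `y` by `0` gives a kernel vector of `L` with a zero entry
  set x : Fin (n + 1) → ℝ := Fin.cons 0 y
  have hsucc : ∀ k : Fin n, (L *ᵥ x) k.succ = 0 := fun k => by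
    simpa [x, mulVec, dotProduct, Fin.sum_univ_succ] using congrFun hy k
  have hx : L *ᵥ x = 0 := by
    have hsum := sum_mulVec_eq_zero hcol x
    rw [Fin.sum_univ_succ, Finset.sum_eq_zero fun k _ => hsucc k, add_zero] at hsum
    ext i
    exact Fin.cases hsum hsucc i
  have hx_ne : x ≠ 0 := fun h => hy_ne (funext fun k => by simpa [x] using congrFun h k.succ)
  rcases pos_or_neg_of_mulVec_eq_zero hess hirr hcol hx hx_ne with h | h
  · exact (h 0).ne' rfl
  · exact (h 0).ne rfl

lemma adjugate_col_pos_or_neg (hess : ∀ i j, i ≠ j → 0 ≤ L i j)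
    (hirr : IsIrreducibleMatrix L) (hcol : ∀ j, ∑ i, L i j = 0) :
    (∀ i, 0 < adjugate L i 0) ∨ (∀ i, adjugate L i 0 < 0) :=
  pos_or_neg_of_mulVec_eq_zero hess hirr hcol (mulVec_adjugate_col_eq_zero hcol 0)
    fun h => adjugate_zero_zero_ne_zero hess hirr hcol (congrFun h 0)

end Adjugate

section Resolvent

variable {ι : Type*} [Fintype ι] [DecidableEq ι]

lemma det_updateRow_eq_vecMul_adjugate {R : Type*} [CommRing R] (A : Matrix ι ι R) (i : ι)
    (v : ι → R) : (A.updateRow i v).det = (v ᵥ* adjugate A) i := by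
  rw [← cramer_transpose_apply, cramer_eq_adjugate_mulVec, ← adjugate_transpose, mulVec_transpose]

lemma det_updateRow_one_vecMul {R : Type*} [CommRing R] (A : Matrix ι ι R) (i : ι) :
    (A.updateRow i (1 ᵥ* A)).det = A.det := by
  simpa [vecMul_eq_sum] using det_updateRow_sum A i 1

variable {L : Matrix ι ι ℝ}

lemma inv_diagonal_sub_smul_eq (hcol : ∀ j, ∑ i, L i j = 0) (γ : ι → ℝ) (i₀ : ι) {d : ℝ}
    (hd : d ≠ 0) :
    (diagonal γ - d • L)⁻¹ = (((d⁻¹ • diagonal γ - L).updateRow i₀ γ).det)⁻¹ •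
      adjugate (d⁻¹ • diagonal γ - L) := by
  set N := d⁻¹ • diagonal γ - L
  have hrows : 1 ᵥ* N = d⁻¹ • γ := by
    ext j
    simp [N, vecMul, dotProduct, Finset.sum_sub_distrib, hcol j, diagonal_apply]
  have hdetN : N.det = d⁻¹ * (N.updateRow i₀ γ).det := by
    rw [← det_updateRow_one_vecMul N i₀, hrows, det_updateRow_smul]
  have hV : diagonal γ - d • L = d • N := by
    simp [N, smul_sub, smul_smul, hd]
  obtain ⟨k, hk⟩ : ∃ k, Fintype.card ι = k + 1 :=
    Nat.exists_eq_succ_of_ne_zero (Fintype.card_pos_iff.2 ⟨i₀⟩).ne'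
  rw [hV, inv_def, det_smul, adjugate_smul, hdetN, hk, Nat.add_sub_cancel, smul_smul,
    Ring.inverse_eq_inv', pow_succ]
  congr 1
  field_simp

lemma tendsto_inv_diagonal_sub_smul (hcol : ∀ j, ∑ i, L i j = 0) (γ : ι → ℝ) (i₀ : ι)
    (hc : ∑ j, γ j * adjugate L j i₀ ≠ 0) :
    Tendsto (fun d : ℝ => (diagonal γ - d • L)⁻¹) atTop
      (𝓝 ((∑ j, γ j * adjugate L j i₀)⁻¹ • adjugate L)) := by
  set c := ∑ j, γ j * adjugate L j i₀
  set G : ℝ → Matrix ι ι ℝ := fun ε =>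
    (((ε • diagonal γ - L).updateRow i₀ γ).det)⁻¹ • adjugate (ε • diagonal γ - L)
  -- at `ε = 0` both factors of `G` pick up the same sign `(-1) ^ (card ι - 1)` from `-L`
  have hadj : adjugate ((0 : ℝ) • diagonal γ - L) =
      (-1 : ℝ) ^ (Fintype.card ι - 1) • adjugate L := by
    rw [zero_smul, zero_sub, ← neg_one_smul ℝ L, adjugate_smul]
  have hdet : (((0 : ℝ) • diagonal γ - L).updateRow i₀ γ).det =
      (-1 : ℝ) ^ (Fintype.card ι - 1) * c := by
    rw [det_updateRow_eq_vecMul_adjugate, hadj, vecMul_smul]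
    rfl
  have hG0 : G 0 = c⁻¹ • adjugate L := by
    have hsign : (-1 : ℝ) ^ (Fintype.card ι - 1) ≠ 0 := pow_ne_zero _ (by norm_num)
    simp only [G, hdet, hadj, smul_smul]
    congr 1
    field_simp
  have hcont : Continuous fun ε : ℝ => ε • diagonal γ - L := by fun_prop
  have hGcont : ContinuousAt G 0 := by
    refine ContinuousAt.fun_smul ?_ (hcont.matrix_adjugate.continuousAt)
    refine ((hcont.matrix_updateRow i₀ continuous_const).matrix_det.continuousAt).inv₀ ?_
    rw [hdet]
    exact mul_ne_zero (pow_ne_zero _ (by norm_num)) hc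
  rw [← hG0]
  refine ((hGcont.tendsto).comp tendsto_inv_atTop_zero).congr' ?_
  filter_upwards [eventually_ne_atTop 0] with d hd
  rw [Function.comp_apply, inv_diagonal_sub_smul_eq hcol γ i₀ hd]

end Resolvent

lemma div_sum_mul_pos {ι : Type*} [Fintype ι] [Nonempty ι] {γ w : ι → ℝ}
    (hγ : ∀ i, 0 < γ i) (hw : (∀ i, 0 < w i) ∨ (∀ i, w i < 0)) (i : ι) :
    0 < w i / ∑ j, γ j * w j := by
  rcases hw with hw | hw
  · exact div_pos (hw i) (Finset.sum_pos (fun j _ => mul_pos (hγ j) (hw j)) Finset.univ_nonempty)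
  · exact div_pos_of_neg_of_neg (hw i)
      (Finset.sum_neg (fun j _ => mul_neg_of_pos_of_neg (hγ j) (hw j)) Finset.univ_nonempty)

lemma cofactor_eq_adjugate {n : ℕ} (A : Matrix (Fin (n + 1)) (Fin (n + 1)) ℝ)
    (i j : Fin (n + 1)) : cofactor A i j = adjugate A j i := by
  rw [cofactor, adjugate_fin_succ_eq_det_submatrix]

theorem R0_tendsto_atTop_general {n : ℕ}
    (L : Matrix (Fin (n+1)) (Fin (n+1)) ℝ)
    (hess : ∀ i j, i ≠ j → 0 ≤ L i j)
    (hirr : IsIrreducibleMatrix L)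
    (hcol : ∀ j, ∑ i, L i j = 0)
    (β γ : Fin (n+1) → ℝ) (hβ : ∀ i, 0 < β i) (hγ : ∀ i, 0 < γ i) :
    Filter.Tendsto
      (fun d : ℝ => specRad (Matrix.diagonal β * (Matrix.diagonal γ - d • L)⁻¹))
      Filter.atTop
      (nhds ((∑ i, β i * cofactor L i i) / (∑ i, γ i * cofactor L i i))) := by
  set w : Fin (n + 1) → ℝ := fun i => adjugate L i 0
  set c := ∑ j, γ j * w j
  have hrow : ∀ i j, adjugate L i j = w i := adjugate_apply_eq_apply_zero hess hirr hcol
  have hwc : ∀ i, 0 < w i / c := div_sum_mul_pos hγ (adjugate_col_pos_or_neg hess hirr hcol)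
  have hc : c ≠ 0 := fun h => (hwc 0).ne' (by rw [h, div_zero])
  have hp : ∀ i, 0 < β i * (w i / c) := fun i => mul_pos (hβ i) (hwc i)
  have hlim := (tendsto_inv_diagonal_sub_smul hcol γ 0 hc).const_mul (diagonal β)
  have hlim_apply : ∀ i j, (diagonal β * (c⁻¹ • adjugate L)) i j = β i * (w i / c) := by
    intro i j
    rw [diagonal_mul, Matrix.smul_apply, hrow, smul_eq_mul, inv_mul_eq_div]
  convert tendsto_specRad_of_apply_eq hlim hlim_apply (fun i => (hp i).le)
    fun h => (hp 0).ne' (congrFun h 0) using 2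
  simp only [cofactor_eq_adjugate, hrow, Finset.sum_div, mul_div_assoc]
  rfl

/-- For an essentially nonnegative, irreducible `L` with zero column sums,
`R0(d) = ρ(F·V(d)⁻¹)` converges as `d → ∞` to `(Σ β_i·C_{ii})/(Σ γ_i·C_{ii})`. -/
theorem R0_tendsto_atTop {n : ℕ} (hn : 1 ≤ n)
    (L : Matrix (Fin (n+1)) (Fin (n+1)) ℝ)
    (hess : ∀ i j, i ≠ j → 0 ≤ L i j)
    (hirr : IsIrreducibleMatrix L)
    (hcol : ∀ j, ∑ i, L i j = 0)
    (β γ : Fin (n+1) → ℝ) (hβ : ∀ i, 0 < β i) (hγ : ∀ i, 0 < γ i) :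
    Filter.Tendsto
      (fun d : ℝ => specRad (Matrix.diagonal β * (Matrix.diagonal γ - d • L)⁻¹))
      Filter.atTop
      (nhds ((∑ i, β i * cofactor L i i) / (∑ i, γ i * cofactor L i i))) :=
  R0_tendsto_atTop_general L hess hirr hcol β γ hβ hγ
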